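/- Let L/K be a finite Galois field extension, G a group acting on L through a surjection onto Gal(L/K) with kernel H, and V, W semilinear representations of G over L. For any field extension K'/K, set L' := K' ⊗_K L with the induced G-action. Then the natural map K' ⊗_K Hom_{L⋊G}(V, W) → Hom_{L'⋊G}(L' ⊗_L V, L' ⊗_L W) is an isomorphism of K'-vector spaces. -/

import Mathlib

open scoped TensorProduct

variable {K L : Type*} [Field K] [Field L] [Algebra K L]
variable {G : Type*} [Group G]
variable {V W : Type*} [AddCommGroup V] [Module K V] [Module L V] [IsScalarTower K L V]
  [AddCommGroup W] [Module K W] [Module L W] [IsScalarTower K L W]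

/-- `Hom_{L⋊G}(V, W)`: `L`-linear `G`-equivariant maps between semilinear
representations, as a `K`-submodule of `V →ₗ[K] W`. -/
def homSL (σ : G →* (L ≃ₐ[K] L))
    (ρV : G →* (V ≃ₗ[K] V)) (ρW : G →* (W ≃ₗ[K] W)) :
    Submodule K (V →ₗ[K] W) where
  carrier := {f | (∀ (c : L) (v : V), f (c • v) = c • f v) ∧
    ∀ (g : G) (v : V), f (ρV g v) = ρW g (f v)}
  add_mem' := by
    intro f g hf hg
    exact ⟨fun c v => by simp [hf.1, hg.1], fun g' v => by simp [hf.2, hg.2]⟩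
  zero_mem' := ⟨fun c v => by simp, fun g v => by simp⟩
  smul_mem' := by
    intro c f hf
    refine ⟨fun a v => ?_, fun g v => by simp [hf.2]⟩
    rw [LinearMap.smul_apply, LinearMap.smul_apply, hf.1, smul_comm]

variable (K' : Type*) [Field K'] [Algebra K K']

/-- The action of `a ∈ L ⊆ L' = K' ⊗_K L` on the base change `K' ⊗_K V`. -/
noncomputable def aMap (a : L) : (K' ⊗[K] V) →ₗ[K] (K' ⊗[K] V) :=
  LinearMap.lTensor K' ((LinearMap.lsmul L V a).restrictScalars K)

/-- The (semilinear) action of `g ∈ G` on the base change `K' ⊗_K V`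
(`G` acts trivially on `K'`). -/
noncomputable def bMap (ρV : G →* (V ≃ₗ[K] V)) (g : G) :
    (K' ⊗[K] V) →ₗ[K] (K' ⊗[K] V) :=
  LinearMap.lTensor K' (ρV g).toLinearMap

/-- `Hom_{L'⋊G}(V_{L'}, W_{L'})` for `L' = K' ⊗_K L`: the set of maps that are
`K'`-linear, commute with the action of `L`, and are `G`-equivariant. -/
def homSL' (ρV : G →* (V ≃ₗ[K] V)) (ρW : G →* (W ≃ₗ[K] W)) :
    Set ((K' ⊗[K] V) →ₗ[K] (K' ⊗[K] W)) :=
  {f | (∀ (k : K') (x : K' ⊗[K] V), f (k • x) = k • f x) ∧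
    (∀ (a : L) (x : K' ⊗[K] V), f (aMap K' a x) = aMap K' a (f x)) ∧
    ∀ (g : G) (x : K' ⊗[K] V), f (bMap K' ρV g x) = bMap K' ρW g (f x)}

/-- The natural base-change map
`K' ⊗_K Hom_{L⋊G}(V, W) → Hom((K' ⊗_K V) → (K' ⊗_K W))`, `k ⊗ f ↦ k • (1 ⊗ f)`. -/
noncomputable def bcMap (σ : G →* (L ≃ₐ[K] L))
    (ρV : G →* (V ≃ₗ[K] V)) (ρW : G →* (W ≃ₗ[K] W)) :
    K' ⊗[K] (homSL σ ρV ρW) →ₗ[K] ((K' ⊗[K] V) →ₗ[K] (K' ⊗[K] W)) :=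
  TensorProduct.lift
    (LinearMap.mk₂ K
      (fun (k : K') (f : homSL σ ρV ρW) => k • LinearMap.lTensor K' (f : V →ₗ[K] W))
      (fun k k' f => add_smul k k' _)
      (fun c k f => smul_assoc c k _)
      (fun k f g => by
        simp only [Submodule.coe_add, LinearMap.lTensor_add, smul_add])
      (fun k c f => by
        simp only [SetLike.val_smul, LinearMap.lTensor_smul]
        exact smul_comm c k (LinearMap.lTensor K' (f : V →ₗ[K] W))))

/-!
Fix a `K`-basis `(bᵢ)` of `K'`. Every element of `K' ⊗_K N` is uniquely `∑ bᵢ ⊗ nᵢ`, and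
maps of the form `lTensor T` act coefficientwise. Hence a `K'`-linear map
`F : K' ⊗ V → K' ⊗ W` is determined by the `K`-linear components `Fᵢ : v ↦ (F (1 ⊗ v))ᵢ`,
and `F` commutes with `lTensor T` (the actions of `L` and of `G`) exactly when every `Fᵢ`
commutes with `T`. Since `V` is finite-dimensional over `K`, only finitely many `Fᵢ` are
nonzero, so `F` is the image of `∑ bᵢ ⊗ Fᵢ`, with every `Fᵢ ∈ Hom_{L⋊G}(V, W)`.
-/

open TensorProduct

section Coefficients

variable {R A N P ι : Type*} [CommSemiring R] [AddCommMonoid A] [Module R A]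
  [AddCommMonoid N] [Module R N] [AddCommMonoid P] [Module R P] [DecidableEq ι]
  (b : Module.Basis ι R A)

theorem TensorProduct.equivFinsuppOfBasisLeft_lTensor_apply (f : N →ₗ[R] P)
    (y : A ⊗[R] N) (i : ι) :
    equivFinsuppOfBasisLeft b (f.lTensor A y) i = f (equivFinsuppOfBasisLeft b y i) := by
  induction y using TensorProduct.induction_on with
  | zero => simp
  | tmul a n => simp
  | add y z hy hz => simp [hy, hz]

theorem TensorProduct.equivFinsuppOfBasisLeft_apply_tmul_of_comm
    {F : A ⊗[R] N →ₗ[R] A ⊗[R] P} {T : N →ₗ[R] N} {T' : P →ₗ[R] P}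
    (hF : ∀ y, F (T.lTensor A y) = T'.lTensor A (F y)) (a : A) (n : N) (i : ι) :
    equivFinsuppOfBasisLeft b (F (a ⊗ₜ T n)) i =
      T' (equivFinsuppOfBasisLeft b (F (a ⊗ₜ n)) i) := by
  rw [← LinearMap.lTensor_tmul, hF, equivFinsuppOfBasisLeft_lTensor_apply]

end Coefficients

section BaseChange

variable (σ : G →* (L ≃ₐ[K] L)) (ρV : G →* (V ≃ₗ[K] V)) (ρW : G →* (W ≃ₗ[K] W))

section

omit [IsScalarTower K L V]

theorem bcMap_tmul (k : K') (f : homSL σ ρV ρW) :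
    bcMap K' σ ρV ρW (k ⊗ₜ f) = k • (f : V →ₗ[K] W).lTensor K' :=
  rfl

theorem equivFinsuppOfBasisLeft_bcMap_apply_one_tmul {ι : Type*} [DecidableEq ι]
    (b : Module.Basis ι K K') (x : K' ⊗[K] homSL σ ρV ρW) (v : V) (i : ι) :
    equivFinsuppOfBasisLeft b (bcMap K' σ ρV ρW x (1 ⊗ₜ v)) i =
      (equivFinsuppOfBasisLeft b x i : V →ₗ[K] W) v := by
  induction x using TensorProduct.induction_on with
  | zero => simp
  | tmul k f => simp [bcMap_tmul, smul_tmul']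
  | add x y hx hy => simp [hx, hy]

theorem bcMap_injective : Function.Injective (bcMap K' σ ρV ρW) := by
  classical
  let b := Module.Basis.ofVectorSpace K K'
  refine (injective_iff_map_eq_zero _).2 fun x hx => (equivFinsuppOfBasisLeft b).injective ?_
  ext i v
  simpa [hx] using (equivFinsuppOfBasisLeft_bcMap_apply_one_tmul K' σ ρV ρW b x v i).symm

theorem bcMap_apply_smul (x : K' ⊗[K] homSL σ ρV ρW) (k : K') (y : K' ⊗[K] V) :
    bcMap K' σ ρV ρW x (k • y) = k • bcMap K' σ ρV ρW x y := by
  induction x using TensorProduct.induction_on with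
  | zero => simp
  | tmul k' f => rw [bcMap_tmul, LinearMap.smul_apply, LinearMap.smul_apply,
      ← LinearMap.smul_lTensor, smul_comm]
  | add x x' hx hx' => simp only [map_add, LinearMap.add_apply, hx, hx', smul_add]

theorem bcMap_apply_lTensor {T : V →ₗ[K] V} {T' : W →ₗ[K] W}
    (hT : ∀ f ∈ homSL σ ρV ρW, f ∘ₗ T = T' ∘ₗ f) (x : K' ⊗[K] homSL σ ρV ρW)
    (y : K' ⊗[K] V) :
    bcMap K' σ ρV ρW x (T.lTensor K' y) = T'.lTensor K' (bcMap K' σ ρV ρW x y) := by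
  induction x using TensorProduct.induction_on with
  | zero => simp
  | tmul k f =>
    rw [bcMap_tmul, LinearMap.smul_apply, LinearMap.smul_apply, ← LinearMap.smul_lTensor,
      ← LinearMap.comp_apply, ← LinearMap.lTensor_comp, hT f f.2, LinearMap.lTensor_comp,
      LinearMap.comp_apply]
  | add x x' hx hx' => simp only [map_add, LinearMap.add_apply, hx, hx']

end

theorem bcMap_mem_homSL' (x : K' ⊗[K] homSL σ ρV ρW) :
    bcMap K' σ ρV ρW x ∈ homSL' (L := L) K' ρV ρW :=
  ⟨bcMap_apply_smul K' σ ρV ρW x,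
    fun a => bcMap_apply_lTensor K' σ ρV ρW (fun _ hf => LinearMap.ext (hf.1 a)) x,
    fun g => bcMap_apply_lTensor K' σ ρV ρW (fun _ hf => LinearMap.ext (hf.2 g)) x⟩

theorem exists_bcMap_eq_of_mem_homSL' [Module.Finite K V] {F : K' ⊗[K] V →ₗ[K] K' ⊗[K] W}
    (hF : F ∈ homSL' (L := L) K' ρV ρW) : ∃ x, bcMap K' σ ρV ρW x = F := by
  classical
  obtain ⟨hF_smul, hF_L, hF_G⟩ := hF
  let b := Module.Basis.ofVectorSpace K K'
  let c := equivFinsuppOfBasisLeft b (N := W)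
  -- the components `Fᵢ`, finitely supported because `V` is finite over `K`
  obtain ⟨Fc, hFc⟩ := (LinearMap.finsuppLinearMap_bijective_of_moduleFinite K V W _ K).2
    (c.toLinearMap ∘ₗ F ∘ₗ TensorProduct.mk K K' V 1)
  have hFc_apply i (v : V) : Fc i v = c (F (1 ⊗ₜ v)) i :=
    DFunLike.congr_fun (DFunLike.congr_fun hFc v) i
  have hFc_mem i : Fc i ∈ homSL σ ρV ρW := by
    refine ⟨fun a v => ?_, fun g v => ?_⟩ <;> simp only [hFc_apply]
    · exact equivFinsuppOfBasisLeft_apply_tmul_of_comm b (hF_L a) 1 v i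
    · exact equivFinsuppOfBasisLeft_apply_tmul_of_comm b (hF_G g) 1 v i
  let x : _ →₀ homSL σ ρV ρW := Finsupp.onFinset Fc.support (fun i => ⟨Fc i, hFc_mem i⟩)
    fun i hi => Finsupp.mem_support_iff.2 fun h => hi (Subtype.ext h)
  refine ⟨(equivFinsuppOfBasisLeft b).symm x, TensorProduct.ext' fun k v => ?_⟩
  have h_one : bcMap K' σ ρV ρW ((equivFinsuppOfBasisLeft b).symm x) (1 ⊗ₜ v) = F (1 ⊗ₜ v) :=
    c.injective <| Finsupp.ext fun i => by
      rw [equivFinsuppOfBasisLeft_bcMap_apply_one_tmul, LinearEquiv.apply_symm_apply,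
        Finsupp.onFinset_apply, hFc_apply]
  rw [← mul_one k, ← smul_eq_mul, ← smul_tmul', bcMap_apply_smul, hF_smul, h_one]

end BaseChange

theorem stmt12 [FiniteDimensional K L] (σ : G →* (L ≃ₐ[K] L)) [FiniteDimensional L V]
    (ρV : G →* (V ≃ₗ[K] V)) (ρW : G →* (W ≃ₗ[K] W)) :
    Function.Injective (bcMap K' σ ρV ρW) ∧
    Set.range (bcMap K' σ ρV ρW) = homSL' (L := L) K' ρV ρW := by
  have : Module.Finite K V := .trans L V
  exact ⟨bcMap_injective K' σ ρV ρW,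
    (Set.range_subset_iff.2 (bcMap_mem_homSL' K' σ ρV ρW)).antisymm
      fun _ hF => exists_bcMap_eq_of_mem_homSL' K' σ ρV ρW hF⟩
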